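/- Let Σ=(Γ,σ) be a connected unbalanced signed graph with an orientation ω compatible with σ, let G be a finite additive abelian group, and let f be a G-tension of Σ. Then there exists u ∈ G such that for every closed walk W=(v₁,e₁,…,v_k,e_k,v₁) around an unbalanced cycle of Σ, Σ_{i=1}^k f(e_i) ∈ u + 2G. -/

import Mathlib

attribute [local instance] Classical.propDecidable

noncomputable section SignedGraphs

/-- A signed graph: a multigraph with ordered pairs of endpoints (the order is
an artefact of the encoding) together with a sign `±1` on each edge. -/
structure SGraph (V : Type*) (E : Type*) where
  ends : E → V × V
  sign : E → ℤˣ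

namespace SGraph

variable {V E : Type*}

/-- Endpoint of `e` on side `b`; a loop has both endpoints equal, but its two
half-edges are distinguished by the side `b`. -/
def endpt (Γ : SGraph V E) (e : E) (b : Bool) : V :=
  cond b (Γ.ends e).1 (Γ.ends e).2

/-- `e` is a loop of the underlying graph. -/
def IsLoop (Γ : SGraph V E) (e : E) : Prop := (Γ.ends e).1 = (Γ.ends e).2

/-- Walks in a signed multigraph: a step traverses an edge `e` in direction `d`
(from the side-`d` endpoint to the other endpoint). -/
inductive Walk (Γ : SGraph V E) : V → V → Type _
  | nil (v : V) : Walk Γ v v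
  | cons (e : E) (d : Bool) {w : V} (p : Walk Γ (Γ.endpt e (!d)) w) : Walk Γ (Γ.endpt e d) w

namespace Walk

variable {Γ : SGraph V E}

/-- The list of vertices visited by a walk (including the final one). -/
def verts : ∀ {u v : V}, Γ.Walk u v → List V
  | _, _, .nil x => [x]
  | _, _, .cons e d p => Γ.endpt e d :: p.verts

/-- The list of edges traversed by a walk. -/
def edges : ∀ {u v : V}, Γ.Walk u v → List E
  | _, _, .nil _ => []
  | _, _, .cons e _ p => e :: p.edges

/-- The list of (edge, direction) steps of a walk. -/
def steps : ∀ {u v : V}, Γ.Walk u v → List (E × Bool)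
  | _, _, .nil _ => []
  | _, _, .cons e d p => (e, d) :: p.steps

/-- The sources of the steps of a walk, i.e. all visited vertices except the last. -/
def srcs {u v : V} (W : Γ.Walk u v) : List V := W.verts.dropLast

/-- The sign of a walk: the product of the signs of its edges. -/
def sgn : ∀ {u v : V}, Γ.Walk u v → ℤˣ
  | _, _, .nil _ => 1
  | _, _, .cons e _ p => Γ.sign e * p.sgn

/-- Concatenation of walks. -/
def append : ∀ {u v w : V}, Γ.Walk u v → Γ.Walk v w → Γ.Walk u w
  | _, _, _, .nil _, q => q
  | _, _, _, .cons e d p, q => .cons e d (p.append q)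

/-- The sum `Σᵢ f(eᵢ)` of the values of `f` on the edges of the walk,
with multiplicity. -/
def edgeSum {G : Type*} [AddCommGroup G] (f : E → G) {u v : V} (W : Γ.Walk u v) : G :=
  (W.edges.map f).sum

/-- The sum `Σᵢ ω(vᵢ,eᵢ)·(Π_{j<i} σ(eⱼ))·f(eᵢ)` along a walk, where `ω(vᵢ,eᵢ)`
is the value of `ω` on the half-edge by which the walk leaves `vᵢ`. -/
def tensionSum {G : Type*} [AddCommGroup G] (ω : E → Bool → ℤˣ) (f : E → G) :
    ∀ {u v : V}, Γ.Walk u v → G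
  | _, _, .nil _ => 0
  | _, _, .cons e d p => ((ω e d : ℤ) • f e) + ((Γ.sign e : ℤ) • tensionSum ω f p)

/-- `Q` is the reverse of the walk `P`. -/
def IsReverseOf {u v : V} (Q : Γ.Walk v u) (P : Γ.Walk u v) : Prop :=
  Q.steps = P.steps.reverse.map fun s => (s.1, !s.2)

end Walk

/-- A closed walk is a cycle if it is nontrivial, visits no vertex twice and
uses no edge twice. -/
def IsCycle (Γ : SGraph V E) {v : V} (W : Γ.Walk v v) : Prop :=
  W.edges ≠ [] ∧ W.srcs.Nodup ∧ W.edges.Nodup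

/-- A balanced (positive) cycle. -/
def IsBalancedCycle (Γ : SGraph V E) {v : V} (W : Γ.Walk v v) : Prop :=
  Γ.IsCycle W ∧ W.sgn = 1

/-- An unbalanced (negative) cycle. -/
def IsUnbalancedCycle (Γ : SGraph V E) {v : V} (W : Γ.Walk v v) : Prop :=
  Γ.IsCycle W ∧ W.sgn = -1

/-- A nontrivial walk that is a simple path (all visited vertices distinct). -/
def IsPathWalk (Γ : SGraph V E) {u v : V} (P : Γ.Walk u v) : Prop :=
  P.edges ≠ [] ∧ P.verts.Nodup

/-- A tight handcuff at `v`: two edge-disjoint unbalanced cycles sharing exactly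
the vertex `v`. -/
def IsTightHandcuff (Γ : SGraph V E) {v : V} (C₁ C₂ : Γ.Walk v v) : Prop :=
  Γ.IsUnbalancedCycle C₁ ∧ Γ.IsUnbalancedCycle C₂ ∧
    (∀ x ∈ C₁.srcs, x ∈ C₂.srcs → x = v) ∧ ∀ e ∈ C₁.edges, e ∉ C₂.edges

/-- A loose handcuff: two vertex-disjoint unbalanced cycles `C₁` (at `u`) and
`C₂` (at `w`) joined by a simple path `P` from `u` to `w` meeting the cycles
exactly in its endpoints. -/
def IsLooseHandcuff (Γ : SGraph V E) {u w : V} (C₁ : Γ.Walk u u) (P : Γ.Walk u w)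
    (C₂ : Γ.Walk w w) : Prop :=
  Γ.IsUnbalancedCycle C₁ ∧ Γ.IsUnbalancedCycle C₂ ∧ Γ.IsPathWalk P ∧
    (∀ x ∈ C₁.srcs, x ∉ C₂.srcs) ∧
    (∀ x ∈ P.verts, x ∈ C₁.srcs → x = u) ∧
    (∀ x ∈ P.verts, x ∈ C₂.srcs → x = w) ∧
    ∀ e ∈ P.edges, e ∉ C₁.edges ∧ e ∉ C₂.edges

/-- The canonical closed walks traversing a circuit of the signed graph:
a balanced cycle, a tight handcuff `C₁ * C₂`, or a loose handcuff
`C₁ * P * C₂ * P⁻¹` (the circuit path edges being used twice). -/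
def IsBasicCircuitWalk (Γ : SGraph V E) {v : V} (W : Γ.Walk v v) : Prop :=
  Γ.IsBalancedCycle W ∨
    (∃ C₁ C₂ : Γ.Walk v v, Γ.IsTightHandcuff C₁ C₂ ∧ W = C₁.append C₂) ∨
    ∃ (w : V) (C₁ : Γ.Walk v v) (P : Γ.Walk v w) (C₂ : Γ.Walk w w) (Q : Γ.Walk w v),
      Γ.IsLooseHandcuff C₁ P C₂ ∧ Q.IsReverseOf P ∧
        W = C₁.append (P.append (C₂.append Q))

/-- A circuit walk: a rotation of a basic circuit walk. -/
def IsCircuitWalk (Γ : SGraph V E) {v : V} (W : Γ.Walk v v) : Prop :=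
  ∃ (u : V) (A : Γ.Walk u v) (B : Γ.Walk v u),
    W = B.append A ∧ Γ.IsBasicCircuitWalk (A.append B)

/-- `e` is a circuit path edge: it lies on the connecting path of an unbalanced
loose handcuff. -/
def IsCircuitPathEdge (Γ : SGraph V E) (e : E) : Prop :=
  ∃ (u w : V) (C₁ : Γ.Walk u u) (P : Γ.Walk u w) (C₂ : Γ.Walk w w),
    Γ.IsLooseHandcuff C₁ P C₂ ∧ e ∈ P.edges

/-- Adjacency via an edge. -/
def Adj (Γ : SGraph V E) (a b : V) : Prop := ∃ e, Γ.ends e = (a, b) ∨ Γ.ends e = (b, a)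

/-- The set of connected components. -/
def Components (Γ : SGraph V E) : Type _ := Quot Γ.Adj

/-- The connected component of a vertex. -/
def comp (Γ : SGraph V E) (v : V) : Γ.Components := Quot.mk _ v

/-- The number `k(Γ)` of connected components. -/
def kAll (Γ : SGraph V E) : ℕ := Nat.card Γ.Components

/-- A connected component is balanced if every cycle it contains is balanced. -/
def IsBalancedComponent (Γ : SGraph V E) (c : Γ.Components) : Prop :=
  ∀ v : V, Γ.comp v = c → ∀ W : Γ.Walk v v, Γ.IsCycle W → W.sgn = 1

/-- The number `k_b(Σ)` of balanced connected components. -/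
def kb (Γ : SGraph V E) : ℕ := Nat.card {c : Γ.Components // Γ.IsBalancedComponent c}

/-- The number `k_u(Σ)` of unbalanced connected components. -/
def ku (Γ : SGraph V E) : ℕ := Nat.card {c : Γ.Components // ¬ Γ.IsBalancedComponent c}

/-- A signed graph is balanced if all its cycles are balanced. -/
def Balanced (Γ : SGraph V E) : Prop :=
  ∀ (v : V) (W : Γ.Walk v v), Γ.IsCycle W → W.sgn = 1

/-- A signed graph is connected if it has exactly one connected component. -/
def Connected (Γ : SGraph V E) : Prop := Γ.kAll = 1

/-- The spanning subgraph `Σ \ Aᶜ` with edge set `A`. -/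
def restrict (Γ : SGraph V E) (A : Set E) : SGraph V A :=
  { ends := fun e => Γ.ends e, sign := fun e => Γ.sign e }

/-- The signed Tutte polynomial (as a function of `x`, `y`, `z`):
`T_Σ(X,Y,Z) = Σ_{A⊆E} (X−1)^{k(Σ\Aᶜ)−k(Σ)} (Y−1)^{|A|−|V|+k_b(Σ\Aᶜ)} (Z−1)^{k_u(Σ\Aᶜ)}`. -/
def signedTutte {K : Type*} [CommRing K] (Γ : SGraph V E) (x y z : K) : K :=
  ∑ᶠ A : Finset E,
    (x - 1) ^ ((Γ.restrict (A : Set E)).kAll - Γ.kAll) *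
      (y - 1) ^ ((A.card + (Γ.restrict (A : Set E)).kb) - Nat.card V) *
        (z - 1) ^ (Γ.restrict (A : Set E)).ku

/-- Deletion of an edge. -/
def deleteEdge (Γ : SGraph V E) (e : E) : SGraph V {e' : E // e' ≠ e} :=
  { ends := fun e' => Γ.ends e'.1, sign := fun e' => Γ.sign e'.1 }

/-- The relation identifying the two endpoints of `e`. -/
def contractRel (Γ : SGraph V E) (e : E) (a b : V) : Prop := (a, b) = Γ.ends e

/-- Contraction of an edge: the two endpoints are identified and the edge is
deleted.  (For a loop this is just deletion, as the identification is trivial.) -/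
def contract (Γ : SGraph V E) (e : E) : SGraph (Quot (Γ.contractRel e)) {e' : E // e' ≠ e} :=
  { ends := fun e' => (Quot.mk _ (Γ.ends e'.1).1, Quot.mk _ (Γ.ends e'.1).2),
    sign := fun e' => Γ.sign e'.1 }

/-- `e` is a bridge: its deletion increases the number of connected components. -/
def IsBridge (Γ : SGraph V E) (e : E) : Prop := Γ.kAll < (Γ.deleteEdge e).kAll

/-- An orientation of the half-edges, compatible with the signature. -/
def IsCompatible (Γ : SGraph V E) (ω : E → Bool → ℤˣ) : Prop :=
  ∀ e, Γ.sign e = -(ω e true * ω e false)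

/-- A `G`-flow: Kirchhoff's law holds at every vertex. -/
def IsFlow (Γ : SGraph V E) (ω : E → Bool → ℤˣ) {G : Type*} [AddCommGroup G]
    (f : E → G) : Prop :=
  ∀ v : V,
    (∑ᶠ e : E, ((if Γ.endpt e true = v then (ω e true : ℤ) • f e else 0) +
      (if Γ.endpt e false = v then (ω e false : ℤ) • f e else 0))) = 0

/-- A `G`-tension: the alternating sum along every circuit walk vanishes. -/
def IsTension (Γ : SGraph V E) (ω : E → Bool → ℤˣ) {G : Type*} [AddCommGroup G]
    (f : E → G) : Prop :=
  ∀ (v : V) (W : Γ.Walk v v), Γ.IsCircuitWalk W → W.tensionSum ω f = 0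

end SGraph

/-- The doubling homomorphism `x ↦ x + x = 2x` of an abelian group. -/
def doubleHom (G : Type*) [AddCommGroup G] : G →+ G :=
  AddMonoidHom.mk' (fun x => x + x) (fun a b => add_add_add_comm a b a b)

/-- The subgroup `2G = {2x : x ∈ G}`. -/
def twoG (G : Type*) [AddCommGroup G] : AddSubgroup G := (doubleHom G).range

/-- The `2`-torsion subgroup `G₂ = {x ∈ G : 2x = 0}`. -/
def torsion2 (G : Type*) [AddCommGroup G] : AddSubgroup G := (doubleHom G).ker

namespace SGraph

variable {V E : Type*}

/-- A `G`-potential difference: a `G`-tension whose sum around every unbalanced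
cycle lies in `2G`. -/
def IsPotentialDifference (Γ : SGraph V E) (ω : E → Bool → ℤˣ) {G : Type*} [AddCommGroup G]
    (f : E → G) : Prop :=
  Γ.IsTension ω f ∧
    ∀ (v : V) (W : Γ.Walk v v), Γ.IsUnbalancedCycle W → W.edgeSum f ∈ twoG G

end SGraph

namespace SGraph

variable {V E : Type*}

/-- Proper coloring by elements of a set `X` with involution `ι`: adjacent
endpoints of a positive edge get different colors, and for a negative edge the
`ι`-image of one endpoint's color differs from the other endpoint's color. -/
def IsProperInvColoring (Γ : SGraph V E) {X : Type*} (ι : X → X) (f : V → X) : Prop :=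
  ∀ e : E, (Γ.sign e = 1 → f ((Γ.ends e).1) ≠ f ((Γ.ends e).2)) ∧
    (Γ.sign e = -1 → ι (f ((Γ.ends e).1)) ≠ f ((Γ.ends e).2))

/-- A proper `G`-coloring: for every edge `e = uv`, `f(u) ≠ f(v)` if `e` is
positive and `-f(u) ≠ f(v)` if `e` is negative, i.e. `σ(e)•f(u) ≠ f(v)`. -/
def IsProperColoring (Γ : SGraph V E) {G : Type*} [AddCommGroup G] (f : V → G) : Prop :=
  ∀ e : E, ((Γ.sign e : ℤ) • f ((Γ.ends e).1)) ≠ f ((Γ.ends e).2)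

/-- Zaslavsky's proper `n`-coloring: colors in `{0, ±1, …, ±n}` with
`f(u) ≠ σ(e)·f(v)` for every edge `e = uv`. -/
def IsProperNColoring (Γ : SGraph V E) (n : ℕ) (f : V → ℤ) : Prop :=
  (∀ v, |f v| ≤ (n : ℤ)) ∧
    ∀ e : E, f ((Γ.ends e).1) ≠ (Γ.sign e : ℤ) * f ((Γ.ends e).2)

/-- `T ⊆ E` is a spanning tree: the spanning subgraph `(V,T)` is connected and
contains no cycle. -/
def IsSpanningTree (Γ : SGraph V E) (T : Set E) : Prop :=
  (Γ.restrict T).Connected ∧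
    ∀ (v : V) (W : (Γ.restrict T).Walk v v), ¬ (Γ.restrict T).IsCycle W

/-- A connected basis of a connected signed graph: a spanning tree if `Σ` is
balanced; otherwise a spanning tree plus one extra edge closing an unbalanced
cycle. -/
def IsConnectedBasis (Γ : SGraph V E) (B : Set E) : Prop :=
  (Γ.Balanced ∧ Γ.IsSpanningTree B) ∨
    (¬ Γ.Balanced ∧ ∃ (T : Set E) (e : E), Γ.IsSpanningTree T ∧ e ∉ T ∧ B = insert e T ∧
      ∀ (v : V) (W : (Γ.restrict B).Walk v v), (Γ.restrict B).IsCycle W → W.sgn = -1)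

/-- Switching at a vertex `v`: the sign of every non-loop edge incident with `v`
is negated; loops keep their sign. -/
def switchAt (Γ : SGraph V E) (v : V) : SGraph V E :=
  { ends := Γ.ends,
    sign := fun e => if ((Γ.ends e).1 = v ↔ (Γ.ends e).2 = v) then Γ.sign e else -Γ.sign e }

/-- Switching at a set `S` of vertices (the composite of the switchings at the
vertices of `S`): the sign of an edge is negated iff exactly one of its
endpoints lies in `S`. -/
def switchSet (Γ : SGraph V E) (S : Set V) : SGraph V E :=
  { ends := Γ.ends,
    sign := fun e => if ((Γ.ends e).1 ∈ S ↔ (Γ.ends e).2 ∈ S) then Γ.sign e else -Γ.sign e }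

/-- Isomorphism of signed graphs (as undirected signed multigraphs). -/
def Iso {V₁ E₁ V₂ E₂ : Type*} (Γ₁ : SGraph V₁ E₁) (Γ₂ : SGraph V₂ E₂) : Prop :=
  ∃ (φ : V₁ ≃ V₂) (ψ : E₁ ≃ E₂), ∀ e : E₁,
    (Γ₂.ends (ψ e) = (φ (Γ₁.ends e).1, φ (Γ₁.ends e).2) ∨
      Γ₂.ends (ψ e) = (φ (Γ₁.ends e).2, φ (Γ₁.ends e).1)) ∧
    Γ₂.sign (ψ e) = Γ₁.sign e

/-- Switching equivalence: isomorphism after switching at a set of vertices. -/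
def SwitchEquiv {V₁ E₁ V₂ E₂ : Type*} (Γ₁ : SGraph V₁ E₁) (Γ₂ : SGraph V₂ E₂) : Prop :=
  ∃ S : Set V₁, Iso (Γ₁.switchSet S) Γ₂

/-- Disjoint union of signed graphs. -/
def disjUnion {V₁ E₁ V₂ E₂ : Type*} (Γ₁ : SGraph V₁ E₁) (Γ₂ : SGraph V₂ E₂) :
    SGraph (V₁ ⊕ V₂) (E₁ ⊕ E₂) where
  ends := fun e => match e with
    | .inl e => (Sum.inl (Γ₁.ends e).1, Sum.inl (Γ₁.ends e).2)
    | .inr e => (Sum.inr (Γ₂.ends e).1, Sum.inr (Γ₂.ends e).2)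
  sign := fun e => match e with
    | .inl e => Γ₁.sign e
    | .inr e => Γ₂.sign e

/-- The difference operator `δ : G^V → G^E`,
`(δg)(e) = ω(v,e)·g(v) + ω(u,e)·g(u)` for `e = uv`. -/
def deltaHom (Γ : SGraph V E) (ω : E → Bool → ℤˣ) (G : Type*) [AddCommGroup G] :
    (V → G) →+ (E → G) :=
  AddMonoidHom.mk'
    (fun g e => (ω e true : ℤ) • g ((Γ.ends e).1) + (ω e false : ℤ) • g ((Γ.ends e).2))
    (by
      intro a b
      funext e
      simp only [Pi.add_apply, smul_add]
      abel)

end SGraph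

end SignedGraphs


/-!
Modulo `2G` the signs act trivially, so `f mod 2G` sums to zero along every circuit walk: a
balanced cycle sums to `0`, and the two cycles of a handcuff have equal sums (the path of a loose
handcuff is traversed twice). Two vertex-disjoint unbalanced cycles are joined, by connectivity,
into a loose handcuff. For unbalanced cycles `C`, `C'` through a common vertex we induct on the
number of edges of `C` outside `C'`. If every edge of `C'` lies on `C`, then `C' = C`, as a cycle
contains no other cycle. Otherwise `C'` contains an ear `Q` of `C`. If `Q` closes up at a single
vertex, `C` and `C'` form a tight handcuff. If not, `Q` splits `C` into a theta graph in which
exactly one of the two cycles through `Q` is unbalanced; it has the same sum as `C`, because the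
balanced one sums to `0`, and fewer edges outside `C'`.
-/

lemma eq_of_add_eq_zero_of_add_self {H : Type*} [AddCommGroup H] (h2 : ∀ x : H, x + x = 0)
    {x y : H} (h : x + y = 0) : x = y := by
  rw [eq_neg_of_add_eq_zero_left h, neg_eq_of_add_eq_zero_left (h2 y)]

lemma Int.units_eq_of_mul_eq_one {u v : ℤˣ} (h : u * v = 1) : u = v := by
  rw [eq_inv_of_mul_eq_one_left h, Int.units_inv_eq_self]

lemma zsmul_units_eq_self {H : Type*} [AddCommGroup H] (h2 : ∀ x : H, x + x = 0) (z : ℤˣ)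
    (x : H) : (z : ℤ) • x = x := by
  rcases Int.units_eq_one_or z with rfl | rfl
  · simp
  · simp [neg_eq_of_add_eq_zero_left (h2 x)]

lemma add_self_eq_zero_mod_twoG {G : Type*} [AddCommGroup G] (x : G ⧸ twoG G) : x + x = 0 :=
  QuotientAddGroup.induction_on x fun a => (QuotientAddGroup.eq_zero_iff (a + a)).mpr ⟨a, rfl⟩

namespace SGraph

variable {V E : Type*} {Γ : SGraph V E}

lemma endpt_cases {p : V → Prop} {e : E} (h₁ : p (Γ.ends e).1) (h₂ : p (Γ.ends e).2) (d : Bool) :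
    p (Γ.endpt e d) := by
  cases d <;> assumption

namespace Walk

@[simp] lemma edges_nil (v : V) : (nil v : Γ.Walk v v).edges = [] := rfl

@[simp] lemma steps_nil (v : V) : (nil v : Γ.Walk v v).steps = [] := rfl

@[simp] lemma srcs_nil (v : V) : (nil v : Γ.Walk v v).srcs = [] := rfl

@[simp] lemma edges_cons (e : E) (d : Bool) {w : V} (p : Γ.Walk (Γ.endpt e (!d)) w) :
    (cons e d p).edges = e :: p.edges := rfl

@[simp] lemma steps_cons (e : E) (d : Bool) {w : V} (p : Γ.Walk (Γ.endpt e (!d)) w) :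
    (cons e d p).steps = (e, d) :: p.steps := rfl

lemma verts_eq_cons : ∀ {u w : V} (W : Γ.Walk u w), W.verts = u :: W.verts.tail
  | _, _, .nil _ => rfl
  | _, _, .cons _ _ _ => rfl

@[simp] lemma srcs_cons (e : E) (d : Bool) {w : V} (p : Γ.Walk (Γ.endpt e (!d)) w) :
    (cons e d p).srcs = Γ.endpt e d :: p.srcs := by
  show (Γ.endpt e d :: p.verts).dropLast = Γ.endpt e d :: p.verts.dropLast
  rw [p.verts_eq_cons, List.dropLast_cons_cons]

lemma verts_eq_srcs_concat : ∀ {u w : V} (W : Γ.Walk u w), W.verts = W.srcs ++ [w]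
  | _, _, .nil _ => rfl
  | _, _, .cons e d p => by rw [srcs_cons, verts, p.verts_eq_srcs_concat]; rfl

lemma length_srcs : ∀ {u w : V} (W : Γ.Walk u w), W.srcs.length = W.edges.length
  | _, _, .nil _ => rfl
  | _, _, .cons e d p => by simp [p.length_srcs]

lemma srcs_eq_nil_iff {u w : V} (W : Γ.Walk u w) : W.srcs = [] ↔ W.edges = [] := by
  rw [← List.length_eq_zero_iff, length_srcs, List.length_eq_zero_iff]

lemma eq_of_edges_eq_nil {u w : V} (W : Γ.Walk u w) (h : W.edges = []) : u = w := by
  cases W with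
  | nil => rfl
  | cons => simp at h

lemma start_mem_srcs {u w : V} (W : Γ.Walk u w) (h : W.edges ≠ []) : u ∈ W.srcs := by
  cases W with
  | nil => simp at h
  | cons => simp

lemma srcs_eq_cons {u w : V} (W : Γ.Walk u w) (h : W.edges ≠ []) :
    W.srcs = u :: W.srcs.tail := by
  cases W with
  | nil => simp at h
  | cons => simp

lemma start_mem_verts {u w : V} (W : Γ.Walk u w) : u ∈ W.verts := by
  rw [W.verts_eq_cons]; exact List.mem_cons_self

lemma end_mem_verts {u w : V} (W : Γ.Walk u w) : w ∈ W.verts := by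
  rw [W.verts_eq_srcs_concat]; simp

lemma srcs_subset_verts {u w : V} (W : Γ.Walk u w) : W.srcs ⊆ W.verts := by
  rw [W.verts_eq_srcs_concat]; exact List.subset_append_left _ _

lemma tail_verts_perm_srcs {v : V} (C : Γ.Walk v v) : C.verts.tail.Perm C.srcs := by
  have h := (List.perm_append_singleton v C.srcs).symm
  rw [← C.verts_eq_srcs_concat, C.verts_eq_cons] at h
  exact h.symm.cons_inv

lemma mem_srcs_of_mem_verts {v x : V} {C : Γ.Walk v v} (h : C.edges ≠ []) (hx : x ∈ C.verts) :
    x ∈ C.srcs := by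
  rw [C.verts_eq_srcs_concat, List.mem_append, List.mem_singleton] at hx
  rcases hx with hx | rfl
  · exact hx
  · exact C.start_mem_srcs h

@[simp] lemma nil_append {u w : V} (q : Γ.Walk u w) : (nil u).append q = q := rfl

@[simp] lemma cons_append (e : E) (d : Bool) {v w : V} (p : Γ.Walk (Γ.endpt e (!d)) v)
    (q : Γ.Walk v w) : (cons e d p).append q = cons e d (p.append q) := rfl

@[simp] lemma append_nil : ∀ {u w : V} (W : Γ.Walk u w), W.append (nil w) = W
  | _, _, .nil _ => rfl
  | _, _, .cons e d p => congrArg (cons e d) p.append_nil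

lemma append_assoc : ∀ {u v w x : V} (p : Γ.Walk u v) (q : Γ.Walk v w) (r : Γ.Walk w x),
    (p.append q).append r = p.append (q.append r)
  | _, _, _, _, .nil _, _, _ => rfl
  | _, _, _, _, .cons e d p, q, r => congrArg (cons e d) (p.append_assoc q r)

@[simp] lemma edges_append : ∀ {u v w : V} (p : Γ.Walk u v) (q : Γ.Walk v w),
    (p.append q).edges = p.edges ++ q.edges
  | _, _, _, .nil _, _ => rfl
  | _, _, _, .cons e d p, q => congrArg (e :: ·) (p.edges_append q)

@[simp] lemma steps_append : ∀ {u v w : V} (p : Γ.Walk u v) (q : Γ.Walk v w),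
    (p.append q).steps = p.steps ++ q.steps
  | _, _, _, .nil _, _ => rfl
  | _, _, _, .cons e d p, q => congrArg ((e, d) :: ·) (p.steps_append q)

lemma verts_append : ∀ {u v w : V} (p : Γ.Walk u v) (q : Γ.Walk v w),
    (p.append q).verts = p.srcs ++ q.verts
  | _, _, _, .nil _, _ => rfl
  | _, _, _, .cons e d p, q => by
    rw [srcs_cons, List.cons_append, ← p.verts_append q]; rfl

@[simp] lemma srcs_append {u v w : V} (p : Γ.Walk u v) (q : Γ.Walk v w) :
    (p.append q).srcs = p.srcs ++ q.srcs := by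
  have h := (p.append q).verts_eq_srcs_concat
  rwa [verts_append, q.verts_eq_srcs_concat, ← List.append_assoc,
    List.append_cancel_right_eq, eq_comm] at h

lemma sgn_eq_prod : ∀ {u w : V} (W : Γ.Walk u w), W.sgn = (W.edges.map Γ.sign).prod
  | _, _, .nil _ => rfl
  | _, _, .cons e d p => by rw [sgn, p.sgn_eq_prod]; rfl

lemma sgn_congr_perm {u w u' w' : V} {W : Γ.Walk u w} {W' : Γ.Walk u' w'}
    (h : W.edges.Perm W'.edges) : W.sgn = W'.sgn := by
  rw [sgn_eq_prod, sgn_eq_prod, (h.map Γ.sign).prod_eq]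

lemma edgeSum_congr_perm {G : Type*} [AddCommGroup G] (f : E → G) {u w u' w' : V}
    {W : Γ.Walk u w} {W' : Γ.Walk u' w'} (h : W.edges.Perm W'.edges) :
    W.edgeSum f = W'.edgeSum f :=
  (h.map f).sum_eq

@[simp] lemma sgn_append {u v w : V} (p : Γ.Walk u v) (q : Γ.Walk v w) :
    (p.append q).sgn = p.sgn * q.sgn := by
  simp [sgn_eq_prod]

@[simp] lemma edgeSum_append {G : Type*} [AddCommGroup G] (f : E → G) {u v w : V}
    (p : Γ.Walk u v) (q : Γ.Walk v w) :
    (p.append q).edgeSum f = p.edgeSum f + q.edgeSum f := by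
  simp [edgeSum]

-- Matching on the direction makes the endpoints of the appended step agree definitionally.
def reverse : ∀ {u w : V}, Γ.Walk u w → Γ.Walk w u
  | _, _, .nil v => .nil v
  | _, _, .cons e true p => p.reverse.append (.cons e false (.nil _))
  | _, _, .cons e false p => p.reverse.append (.cons e true (.nil _))

lemma steps_reverse {u w : V} (W : Γ.Walk u w) :
    W.reverse.steps = W.steps.reverse.map fun s => (s.1, !s.2) := by
  induction W with
  | nil => rfl
  | cons e d p ih => cases d <;> simp [reverse, ih]

lemma edges_reverse {u w : V} (W : Γ.Walk u w) : W.reverse.edges = W.edges.reverse := by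
  induction W with
  | nil => rfl
  | cons e d p ih => cases d <;> simp [reverse, ih]

lemma verts_reverse {u w : V} (W : Γ.Walk u w) : W.reverse.verts = W.verts.reverse := by
  induction W with
  | nil => rfl
  | cons e d p ih =>
    obtain ⟨t, ht⟩ : ∃ t, p.verts = Γ.endpt e (!d) :: t := ⟨_, p.verts_eq_cons⟩
    cases d <;> simp [reverse, verts_append, srcs, ih, verts, ht]

lemma reverse_append {u v w : V} (p : Γ.Walk u v) (q : Γ.Walk v w) :
    (p.append q).reverse = q.reverse.append p.reverse := by
  induction p with
  | nil => simp [reverse]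
  | cons e d p ih => cases d <;> simp [reverse, ih, append_assoc]

lemma srcs_reverse_perm {v : V} (C : Γ.Walk v v) : C.reverse.srcs.Perm C.srcs := by
  have h := C.reverse.tail_verts_perm_srcs
  rw [verts_reverse, C.verts_eq_srcs_concat, List.reverse_append] at h
  exact h.symm.trans (List.reverse_perm _)

@[simp] lemma sgn_reverse {u w : V} (W : Γ.Walk u w) : W.reverse.sgn = W.sgn :=
  sgn_congr_perm (by rw [edges_reverse]; exact List.reverse_perm _)

@[simp] lemma edgeSum_reverse {G : Type*} [AddCommGroup G] (f : E → G) {u w : V}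
    (W : Γ.Walk u w) : W.reverse.edgeSum f = W.edgeSum f :=
  edgeSum_congr_perm f (by rw [edges_reverse]; exact List.reverse_perm _)

lemma ends_mem_verts {u w : V} (W : Γ.Walk u w) {e : E} (he : e ∈ W.edges) :
    (Γ.ends e).1 ∈ W.verts ∧ (Γ.ends e).2 ∈ W.verts := by
  induction W with
  | nil => simp at he
  | cons e' d p ih =>
    simp only [edges_cons, List.mem_cons] at he
    rcases he with rfl | he
    · have h₁ : Γ.endpt e d ∈ (cons e d p).verts := List.mem_cons_self
      have h₂ : Γ.endpt e (!d) ∈ (cons e d p).verts := List.mem_cons_of_mem _ p.start_mem_verts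
      cases d
      · exact ⟨h₂, h₁⟩
      · exact ⟨h₁, h₂⟩
    · exact (ih he).imp (List.mem_cons_of_mem _) (List.mem_cons_of_mem _)

lemma ends_mem_srcs {v : V} (C : Γ.Walk v v) {e : E} (he : e ∈ C.edges) :
    (Γ.ends e).1 ∈ C.srcs ∧ (Γ.ends e).2 ∈ C.srcs :=
  have hC : C.edges ≠ [] := List.ne_nil_of_mem he
  (C.ends_mem_verts he).imp (mem_srcs_of_mem_verts hC) (mem_srcs_of_mem_verts hC)

lemma exists_endpt_mem_srcs {u w : V} (W : Γ.Walk u w) {e : E} (he : e ∈ W.edges) :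
    ∃ d, Γ.endpt e d ∈ W.srcs := by
  induction W with
  | nil => simp at he
  | cons e' d p ih =>
    simp only [edges_cons, List.mem_cons] at he
    rcases he with rfl | he
    · exact ⟨d, by simp⟩
    · obtain ⟨d', hd'⟩ := ih he
      exact ⟨d', by simp [hd']⟩

lemma ends_ne_of_nodup {u w : V} (W : Γ.Walk u w) (hW : W.verts.Nodup) {e : E}
    (he : e ∈ W.edges) : (Γ.ends e).1 ≠ (Γ.ends e).2 := by
  induction W with
  | nil => simp at he
  | cons e' d p ih =>
    rw [verts, List.nodup_cons] at hW
    simp only [edges_cons, List.mem_cons] at he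
    rcases he with rfl | he
    · intro h
      apply hW.1
      cases d
      · simpa [endpt, h] using p.start_mem_verts
      · simpa [endpt, h] using p.start_mem_verts
    · exact ih hW.2 he

lemma not_mem_edges_of_forall_mem_srcs_eq {u w v x : V} {P : Γ.Walk u w}
    {C : Γ.Walk v v} (hP : P.verts.Nodup) (hPC : ∀ y ∈ P.verts, y ∈ C.srcs → y = x) {e : E}
    (he : e ∈ P.edges) : e ∉ C.edges := fun heC =>
  P.ends_ne_of_nodup hP he <|
    (hPC _ (P.ends_mem_verts he).1 (C.ends_mem_srcs heC).1).trans
      (hPC _ (P.ends_mem_verts he).2 (C.ends_mem_srcs heC).2).symm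

lemma exists_eq_append_first {u w : V} (W : Γ.Walk u w) (p : V → Prop)
    (h : ∃ x ∈ W.verts, p x) :
    ∃ (c : V) (P : Γ.Walk u c) (S : Γ.Walk c w),
      p c ∧ W = P.append S ∧ ∀ y ∈ P.srcs, ¬ p y := by
  induction W with
  | nil v =>
    obtain ⟨x, hx, hpx⟩ := h
    rw [verts, List.mem_singleton] at hx
    subst hx
    exact ⟨_, nil _, nil _, hpx, rfl, by simp⟩
  | cons e d q ih =>
    by_cases hp : p (Γ.endpt e d)
    · exact ⟨_, nil _, cons e d q, hp, rfl, by simp⟩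
    · obtain ⟨c, P, S, hc, rfl, hP⟩ : ∃ (c : V) (P : Γ.Walk _ c) (S : Γ.Walk c _),
          p c ∧ q = P.append S ∧ ∀ y ∈ P.srcs, ¬ p y := by
        obtain ⟨x, hx, hpx⟩ := h
        rcases List.mem_cons.mp hx with rfl | hx
        · exact absurd hpx hp
        · exact ih ⟨x, hx, hpx⟩
      refine ⟨c, cons e d P, S, hc, rfl, ?_⟩
      simp only [srcs_cons, List.mem_cons, forall_eq_or_imp]
      exact ⟨hp, hP⟩

lemma exists_eq_append_last {u w : V} (W : Γ.Walk u w) (p : V → Prop)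
    (h : ∃ x ∈ W.verts, p x) :
    ∃ (c : V) (P : Γ.Walk u c) (S : Γ.Walk c w),
      p c ∧ W = P.append S ∧ ∀ y ∈ S.verts.tail, ¬ p y := by
  induction W with
  | nil v =>
    obtain ⟨x, hx, hpx⟩ := h
    rw [verts, List.mem_singleton] at hx
    subst hx
    exact ⟨_, nil _, nil _, hpx, rfl, by simp [verts]⟩
  | cons e d q ih =>
    by_cases hq : ∃ x ∈ q.verts, p x
    · obtain ⟨c, P, S, hc, rfl, hS⟩ := ih hq
      exact ⟨c, cons e d P, S, hc, rfl, hS⟩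
    · push Not at hq
      obtain ⟨x, hx, hpx⟩ := h
      have hx : x = Γ.endpt e d := by
        rcases List.mem_cons.mp hx with rfl | hx
        · rfl
        · exact absurd hpx (hq x hx)
      subst hx
      exact ⟨_, nil _, cons e d q, hpx, rfl, hq⟩

lemma exists_rotation {v x : V} (C : Γ.Walk v v) (hx : x ∈ C.srcs) :
    ∃ R : Γ.Walk x x, R.edges.Perm C.edges ∧ R.srcs.Perm C.srcs := by
  obtain ⟨c, P, S, rfl, rfl, -⟩ :=
    exists_eq_append_first C (· = x) ⟨x, C.srcs_subset_verts hx, rfl⟩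
  exact ⟨S.append P, by simpa using List.perm_append_comm, by simpa using List.perm_append_comm⟩

lemma exists_append_perm {v a b : V} (C : Γ.Walk v v) (ha : a ∈ C.srcs) (hb : b ∈ C.srcs) :
    ∃ (A : Γ.Walk a b) (B : Γ.Walk b a),
      (A.append B).edges.Perm C.edges ∧ (A.append B).srcs.Perm C.srcs := by
  obtain ⟨R, hRe, hRs⟩ := C.exists_rotation ha
  obtain ⟨c, A, B, rfl, rfl, -⟩ :=
    exists_eq_append_first R (· = b) ⟨b, R.srcs_subset_verts (hRs.mem_iff.mpr hb), rfl⟩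
  exact ⟨A, B, hRe, hRs⟩

lemma exists_verts_nodup_subset {a b : V} (W : Γ.Walk a b) :
    ∃ P : Γ.Walk a b, P.verts.Nodup ∧ P.verts ⊆ W.verts := by
  induction W with
  | nil v => exact ⟨nil v, List.nodup_singleton v, List.Subset.refl _⟩
  | cons e d q ih =>
    obtain ⟨P, hPnd, hPW⟩ := ih
    by_cases hmem : Γ.endpt e d ∈ P.verts
    · obtain ⟨c, P₁, P₂, rfl, rfl, -⟩ := exists_eq_append_first P (· = Γ.endpt e d) ⟨_, hmem, rfl⟩
      rw [verts_append] at hPnd hPW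
      exact ⟨P₂, hPnd.sublist (List.sublist_append_right _ _),
        fun x hx => List.mem_cons_of_mem _ (hPW (List.mem_append_right _ hx))⟩
    · refine ⟨cons e d P, List.nodup_cons.mpr ⟨hmem, hPnd⟩, ?_⟩
      exact List.cons_subset_cons _ hPW

lemma exists_path_between {S T : V → Prop} (hST : ∀ x, S x → ¬ T x) {a b : V}
    (W : Γ.Walk a b) (ha : S a) (hb : T b) :
    ∃ (a' b' : V) (P : Γ.Walk a' b'), S a' ∧ T b' ∧ Γ.IsPathWalk P ∧
      (∀ x ∈ P.verts, S x → x = a') ∧ (∀ x ∈ P.verts, T x → x = b') := by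
  obtain ⟨t, A, -, ht, -, hA⟩ := exists_eq_append_first W T ⟨b, W.end_mem_verts, hb⟩
  obtain ⟨s, X, Y, hs, rfl, hY⟩ := exists_eq_append_last A S ⟨a, A.start_mem_verts, ha⟩
  obtain ⟨P, hPnd, hPY⟩ := Y.exists_verts_nodup_subset
  have hne : P.edges ≠ [] := fun h => hST _ hs (P.eq_of_edges_eq_nil h ▸ ht)
  refine ⟨s, t, P, hs, ht, ⟨hne, hPnd⟩, fun x hx hSx => ?_, fun x hx hTx => ?_⟩
  · have hx := hPY hx
    rw [Y.verts_eq_cons, List.mem_cons] at hx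
    exact hx.resolve_right fun hx => hY x hx hSx
  · have hx := hPY hx
    rw [Y.verts_eq_srcs_concat, List.mem_append, List.mem_singleton] at hx
    exact hx.resolve_left fun hx => hA x (by simp [hx]) hTx

end Walk

lemma Connected.nonempty_walk (h : Γ.Connected) (a b : V) : Nonempty (Γ.Walk a b) := by
  have : Subsingleton Γ.Components := (Nat.card_eq_one_iff_unique.mp h).1
  have hab : Relation.EqvGen Γ.Adj a b := Quot.eqvGen_exact (Subsingleton.elim (Γ.comp a) _)
  induction hab with
  | rel x y hxy =>
    obtain ⟨e, he | he⟩ := hxy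
    · obtain rfl : Γ.endpt e true = x := congrArg Prod.fst he
      obtain rfl : Γ.endpt e false = y := congrArg Prod.snd he
      exact ⟨.cons e true (.nil _)⟩
    · obtain rfl : Γ.endpt e false = x := congrArg Prod.snd he
      obtain rfl : Γ.endpt e true = y := congrArg Prod.fst he
      exact ⟨.cons e false (.nil _)⟩
  | refl x => exact ⟨.nil x⟩
  | symm x y _ ih => exact ⟨ih.some.reverse⟩
  | trans x y z _ _ ih₁ ih₂ => exact ⟨ih₁.some.append ih₂.some⟩

lemma IsCycle.of_perm {v x : V} {C : Γ.Walk v v} {R : Γ.Walk x x} (hC : Γ.IsCycle C)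
    (he : R.edges.Perm C.edges) (hs : R.srcs.Perm C.srcs) : Γ.IsCycle R :=
  ⟨fun h => hC.1 (h ▸ he).nil_eq.symm, hs.nodup_iff.mpr hC.2.1, he.nodup_iff.mpr hC.2.2⟩

lemma IsUnbalancedCycle.of_perm {v x : V} {C : Γ.Walk v v} {R : Γ.Walk x x}
    (hC : Γ.IsUnbalancedCycle C) (he : R.edges.Perm C.edges) (hs : R.srcs.Perm C.srcs) :
    Γ.IsUnbalancedCycle R :=
  ⟨hC.1.of_perm he hs, (Walk.sgn_congr_perm he).trans hC.2⟩

lemma IsCycle.reverse {v : V} {C : Γ.Walk v v} (hC : Γ.IsCycle C) : Γ.IsCycle C.reverse :=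
  hC.of_perm (by rw [Walk.edges_reverse]; exact List.reverse_perm _) C.srcs_reverse_perm

lemma IsUnbalancedCycle.reverse {v : V} {C : Γ.Walk v v} (hC : Γ.IsUnbalancedCycle C) :
    Γ.IsUnbalancedCycle C.reverse :=
  ⟨hC.1.reverse, (Walk.sgn_reverse C).trans hC.2⟩

noncomputable def incidence (Γ : SGraph V E) (x : V) (e : E) : ℕ :=
  (if (Γ.ends e).1 = x then 1 else 0) + if (Γ.ends e).2 = x then 1 else 0

lemma incidence_endpt_pos (e : E) (d : Bool) : 0 < Γ.incidence (Γ.endpt e d) e := by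
  cases d <;> simp [incidence, endpt]

lemma Walk.sum_incidence {u w : V} (W : Γ.Walk u w) (x : V) :
    (W.edges.map (Γ.incidence x)).sum = W.srcs.count x + W.verts.tail.count x := by
  induction W with
  | nil => simp [verts]
  | cons e d p ih =>
    have hstep : Γ.incidence x e =
        (if Γ.endpt e d = x then 1 else 0) + if Γ.endpt e (!d) = x then 1 else 0 := by
      cases d
      · exact Nat.add_comm _ _
      · rfl
    rw [edges_cons, List.map_cons, List.sum_cons, ih, hstep, srcs_cons, verts, List.tail_cons,
      List.count_cons]
    conv_rhs => rw [p.verts_eq_cons, List.count_cons]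
    simp only [beq_iff_eq]
    ring

lemma Walk.sum_incidence_of_closed {v : V} (C : Γ.Walk v v) (x : V) :
    (C.edges.map (Γ.incidence x)).sum = 2 * C.srcs.count x := by
  rw [C.sum_incidence, C.tail_verts_perm_srcs.count_eq]
  ring

-- At a vertex of `D`, the two half-edges of `C` are already the two half-edges of `D`.
lemma IsCycle.incidence_eq_zero {v w : V} {C : Γ.Walk v v} {D : Γ.Walk w w}
    (hC : Γ.IsCycle C) (hD : Γ.IsCycle D) (hDC : D.edges ⊆ C.edges) {e : E}
    (heC : e ∈ C.edges) (heD : e ∉ D.edges) {x : V} (hx : x ∈ D.srcs) :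
    Γ.incidence x e = 0 := by
  have hsub : D.edges.toFinset ⊆ C.edges.toFinset := fun e he => by
    simpa using hDC (List.mem_toFinset.mp he)
  have hsplit := Finset.sum_sdiff hsub (f := Γ.incidence x)
  rw [List.sum_toFinset _ hD.2.2, List.sum_toFinset _ hC.2.2, D.sum_incidence_of_closed,
    C.sum_incidence_of_closed, List.count_eq_one_of_mem hD.2.1 hx] at hsplit
  have hle := List.nodup_iff_count_le_one.mp hC.2.1 x
  have hzero : ∑ e ∈ C.edges.toFinset \ D.edges.toFinset, Γ.incidence x e = 0 := by omega
  exact Finset.sum_eq_zero_iff.mp hzero e (by simp [heC, heD])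

lemma IsCycle.edges_perm_of_subset {v w : V} {C : Γ.Walk v v} {D : Γ.Walk w w}
    (hC : Γ.IsCycle C) (hD : Γ.IsCycle D) (hDC : D.edges ⊆ C.edges) :
    D.edges.Perm C.edges := by
  have hreach : ∀ {a b : V} (W : Γ.Walk a b), W.edges ⊆ C.edges → a ∈ D.srcs →
      W.edges ⊆ D.edges := by
    intro a b W
    induction W with
    | nil => simp
    | cons e d p ih =>
      intro hWC ha
      simp only [Walk.edges_cons, List.cons_subset] at hWC ⊢
      have heD : e ∈ D.edges := by
        by_contra heD
        have := hC.incidence_eq_zero hD hDC hWC.1 heD ha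
        exact (incidence_endpt_pos e d).ne' this
      have hD' := D.ends_mem_srcs heD
      exact ⟨heD, ih hWC.2 (endpt_cases hD'.1 hD'.2 _)⟩
  obtain ⟨e₀, he₀⟩ := List.exists_mem_of_ne_nil _ hD.1
  obtain ⟨R, hRe, -⟩ := C.exists_rotation (C.ends_mem_srcs (hDC he₀)).1
  have hCD : C.edges ⊆ D.edges := fun e he =>
    hreach R hRe.subset (D.ends_mem_srcs he₀).1 (hRe.mem_iff.mpr he)
  exact (List.perm_ext_iff_of_nodup hD.2.2 hC.2.2).mpr fun e => ⟨(hDC ·), (hCD ·)⟩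

structure IsEar {v a b : V} (C : Γ.Walk v v) (Q : Γ.Walk a b) : Prop where
  start_mem : a ∈ C.srcs
  end_mem : b ∈ C.srcs
  edges_ne_nil : Q.edges ≠ []
  srcs_nodup : Q.srcs.Nodup
  edges_nodup : Q.edges.Nodup
  not_mem_edges : ∀ e ∈ Q.edges, e ∉ C.edges
  not_mem_srcs : ∀ x ∈ Q.srcs.tail, x ∉ C.srcs

lemma IsEar.of_perm {v x a b : V} {C : Γ.Walk v v} {R : Γ.Walk x x} {Q : Γ.Walk a b}
    (hQ : IsEar C Q) (he : R.edges.Perm C.edges) (hs : R.srcs.Perm C.srcs) : IsEar R Q where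
  start_mem := hs.mem_iff.mpr hQ.start_mem
  end_mem := hs.mem_iff.mpr hQ.end_mem
  edges_ne_nil := hQ.edges_ne_nil
  srcs_nodup := hQ.srcs_nodup
  edges_nodup := hQ.edges_nodup
  not_mem_edges e he' := he.mem_iff.not.mpr (hQ.not_mem_edges e he')
  not_mem_srcs x hx := hs.mem_iff.not.mpr (hQ.not_mem_srcs x hx)

lemma IsEar.reverse {v a b : V} {C : Γ.Walk v v} {Q : Γ.Walk a b} (hQ : IsEar C Q) :
    IsEar C.reverse Q :=
  hQ.of_perm (by rw [Walk.edges_reverse]; exact List.reverse_perm _) C.srcs_reverse_perm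

lemma Walk.exists_segment {S : V → Prop} {F : E → Prop}
    (hFS : ∀ e, F e → S (Γ.ends e).1 ∧ S (Γ.ends e).2) {y z : V} (W : Γ.Walk y z)
    (hy : S y) (hz : S z) (hW : ∃ e ∈ W.edges, ¬ F e) :
    ∃ (a b : V) (pre : Γ.Walk y a) (Q : Γ.Walk a b) (post : Γ.Walk b z),
      W = pre.append (Q.append post) ∧ S a ∧ S b ∧ Q.edges ≠ [] ∧
      (∀ e ∈ Q.edges, ¬ F e) ∧ ∀ x ∈ Q.srcs.tail, ¬ S x := by
  induction W with
  | nil => simp at hW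
  | cons e d q ih =>
    by_cases hF : F e
    · have hW' : ∃ e' ∈ q.edges, ¬ F e' := by
        obtain ⟨e', he', hFe'⟩ := hW
        rcases List.mem_cons.mp he' with rfl | he'
        · exact absurd hF hFe'
        · exact ⟨e', he', hFe'⟩
      obtain ⟨a, b, pre, Q, post, rfl, h⟩ :=
        ih (endpt_cases (hFS e hF).1 (hFS e hF).2 _) hz hW'
      exact ⟨a, b, cons e d pre, Q, post, rfl, h⟩
    · obtain ⟨c, Q, post, hc, rfl, hQ⟩ := exists_eq_append_first q S ⟨_, q.end_mem_verts, hz⟩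
      refine ⟨_, c, nil _, cons e d Q, post, rfl, hy, hc, by simp, ?_, by simpa using hQ⟩
      simp only [edges_cons, List.mem_cons, forall_eq_or_imp]
      refine ⟨hF, fun e' he' hFe' => ?_⟩
      obtain ⟨d', hd'⟩ := Q.exists_endpt_mem_srcs he'
      exact hQ _ hd' (endpt_cases (hFS e' hFe').1 (hFS e' hFe').2 d')

lemma IsCycle.exists_ear {v v' y : V} {C : Γ.Walk v v} {C' : Γ.Walk v' v'}
    (hC' : Γ.IsCycle C') (hy : y ∈ C.srcs) (hy' : y ∈ C'.srcs) (hC'C : ¬ C'.edges ⊆ C.edges) :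
    ∃ (a b : V) (Q : Γ.Walk a b) (R : Γ.Walk b a), IsEar C Q ∧
      (Q.append R).edges.Perm C'.edges ∧ (Q.append R).srcs.Perm C'.srcs := by
  obtain ⟨R₀, hRe, hRs⟩ := C'.exists_rotation hy'
  have hW : ∃ e ∈ R₀.edges, e ∉ C.edges := by
    simp only [List.subset_def, not_forall] at hC'C
    obtain ⟨e, he, heC⟩ := hC'C
    exact ⟨e, hRe.mem_iff.mpr he, heC⟩
  obtain ⟨a, b, pre, Q, post, rfl, ha, hb, hne, hQe, hQs⟩ :=
    R₀.exists_segment (fun e he => C.ends_mem_srcs he) hy hy hW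
  have he : (Q.append (post.append pre)).edges.Perm C'.edges := by
    refine List.Perm.trans ?_ hRe
    simp only [Walk.edges_append]
    rw [← List.append_assoc]
    exact List.perm_append_comm
  have hs : (Q.append (post.append pre)).srcs.Perm C'.srcs := by
    refine List.Perm.trans ?_ hRs
    simp only [Walk.srcs_append]
    rw [← List.append_assoc]
    exact List.perm_append_comm
  have hes := he.nodup_iff.mpr hC'.2.2
  have hss := hs.nodup_iff.mpr hC'.2.1
  simp only [Walk.edges_append, Walk.srcs_append] at hes hss
  exact ⟨a, b, Q, post.append pre,
    ⟨ha, hb, hne, hss.of_append_left, hes.of_append_left, hQe, hQs⟩, he, hs⟩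

lemma IsEar.isTightHandcuff {a : V} {C Q : Γ.Walk a a} (hQ : IsEar C Q)
    (hC : Γ.IsUnbalancedCycle C) (hQc : Γ.IsUnbalancedCycle Q) : Γ.IsTightHandcuff C Q := by
  refine ⟨hC, hQc, fun x hxC hxQ => ?_, fun e heC heQ => hQ.not_mem_edges e heQ heC⟩
  rw [Q.srcs_eq_cons hQ.edges_ne_nil, List.mem_cons] at hxQ
  exact hxQ.resolve_right fun hx => hQ.not_mem_srcs x hx hxC

lemma IsEar.isCycle_append {a b : V} {A Q : Γ.Walk a b} {B : Γ.Walk b a}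
    (hC : Γ.IsCycle (A.append B)) (hA : A.edges ≠ []) (hQ : IsEar (A.append B) Q) :
    Γ.IsCycle (Q.append B) := by
  obtain ⟨-, hs, he⟩ := hC
  simp only [Walk.srcs_append, Walk.edges_append, List.nodup_append] at hs he
  refine ⟨by simp [hQ.edges_ne_nil], ?_, ?_⟩
  · simp only [Walk.srcs_append, List.nodup_append]
    refine ⟨hQ.srcs_nodup, hs.2.1, fun x hxQ y hyB hxy => ?_⟩
    subst hxy
    rw [Q.srcs_eq_cons hQ.edges_ne_nil, List.mem_cons] at hxQ
    rcases hxQ with rfl | hx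
    · exact hs.2.2 _ (A.start_mem_srcs hA) _ hyB rfl
    · exact hQ.not_mem_srcs x hx (by simp [hyB])
  · simp only [Walk.edges_append, List.nodup_append]
    refine ⟨hQ.edges_nodup, he.2.1, fun e heQ e' heB hee => ?_⟩
    subst hee
    exact hQ.not_mem_edges e heQ (by simp [heB])

lemma IsEar.isCycle_append_reverse {a b : V} {A Q : Γ.Walk a b} {B : Γ.Walk b a}
    (hC : Γ.IsCycle (A.append B)) (hB : B.edges ≠ []) (hQ : IsEar (A.append B) Q) :
    Γ.IsCycle (Q.append A.reverse) := by
  have hC' : Γ.IsCycle (B.reverse.append A.reverse) := Walk.reverse_append A B ▸ hC.reverse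
  have hQ' : IsEar (B.reverse.append A.reverse) Q := Walk.reverse_append A B ▸ hQ.reverse
  exact hQ'.isCycle_append hC' (by simpa [Walk.edges_reverse] using hB)

lemma isCircuitWalk_of_isBasicCircuitWalk {v : V} {W : Γ.Walk v v}
    (h : Γ.IsBasicCircuitWalk W) : Γ.IsCircuitWalk W :=
  ⟨v, W, .nil v, rfl, by rwa [Walk.append_nil]⟩

section CircuitNull

variable {H : Type*} [AddCommGroup H]

/-- For a `2`-torsion group `H`, on which the signs act trivially, this is what being an
`H`-tension amounts to. -/
def IsCircuitNull (Γ : SGraph V E) (g : E → H) : Prop :=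
  ∀ (v : V) (W : Γ.Walk v v), Γ.IsCircuitWalk W → W.edgeSum g = 0

namespace IsCircuitNull

variable {g : E → H}

lemma edgeSum_eq_zero (hg : Γ.IsCircuitNull g) {v : V} {W : Γ.Walk v v} (hW : Γ.IsBalancedCycle W) :
    W.edgeSum g = 0 :=
  hg v W (isCircuitWalk_of_isBasicCircuitWalk (.inl hW))

lemma edgeSum_eq_of_isTightHandcuff (hg : Γ.IsCircuitNull g) (h2 : ∀ x : H, x + x = 0)
    {v : V} {C₁ C₂ : Γ.Walk v v}
    (h : Γ.IsTightHandcuff C₁ C₂) : C₁.edgeSum g = C₂.edgeSum g := by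
  have h0 := hg v (C₁.append C₂)
    (isCircuitWalk_of_isBasicCircuitWalk (.inr (.inl ⟨C₁, C₂, h, rfl⟩)))
  rw [Walk.edgeSum_append] at h0
  exact eq_of_add_eq_zero_of_add_self h2 h0

lemma edgeSum_eq_of_isLooseHandcuff (hg : Γ.IsCircuitNull g) (h2 : ∀ x : H, x + x = 0)
    {u w : V} {C₁ : Γ.Walk u u} {P : Γ.Walk u w}
    {C₂ : Γ.Walk w w} (h : Γ.IsLooseHandcuff C₁ P C₂) : C₁.edgeSum g = C₂.edgeSum g := by
  have h0 := hg u (C₁.append (P.append (C₂.append P.reverse)))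
    (isCircuitWalk_of_isBasicCircuitWalk
      (.inr (.inr ⟨w, C₁, P, C₂, P.reverse, h, P.steps_reverse, rfl⟩)))
  simp only [Walk.edgeSum_append, Walk.edgeSum_reverse] at h0
  refine eq_of_add_eq_zero_of_add_self h2 ?_
  rw [← h0, ← add_zero (_ + C₂.edgeSum g), ← h2 (P.edgeSum g)]
  abel

lemma isUnbalancedCycle_append_of_isEar (hg : Γ.IsCircuitNull g) (h2 : ∀ x : H, x + x = 0)
    {v' a b : V} {A Q : Γ.Walk a b} {B : Γ.Walk b a} {C' : Γ.Walk v' v'}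
    (hC : Γ.IsUnbalancedCycle (A.append B)) (hA : A.edges ≠ []) (hB : B.edges ≠ [])
    (hQ : IsEar (A.append B) Q) (hC' : Γ.IsUnbalancedCycle C') (hQC' : Q.edges ⊆ C'.edges)
    (hsgn : Q.sgn * A.sgn = 1) :
    Γ.IsUnbalancedCycle (Q.append B) ∧ (Q.append B).edgeSum g = (A.append B).edgeSum g ∧
      (Q.append B).edges.toFinset \ C'.edges.toFinset ⊂
        (A.append B).edges.toFinset \ C'.edges.toFinset := by
  have hbal : Γ.IsBalancedCycle (Q.append A.reverse) :=
    ⟨hQ.isCycle_append_reverse hC.1 hB, by simpa using hsgn⟩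
  have hQA : Q.edgeSum g = A.edgeSum g :=
    eq_of_add_eq_zero_of_add_self h2 (by simpa using hg.edgeSum_eq_zero hbal)
  have hsgnB : (Q.append B).sgn = -1 := by
    simpa [Int.units_eq_of_mul_eq_one hsgn] using hC.2
  refine ⟨⟨hQ.isCycle_append hC.1 hA, hsgnB⟩, by simp [hQA], ?_⟩
  obtain ⟨e, he, heC'⟩ : ∃ e ∈ (Q.append A.reverse).edges, e ∉ C'.edges := by
    by_contra! hsub
    have := Walk.sgn_congr_perm (hC'.1.edges_perm_of_subset hbal.1 hsub)
    rw [hbal.2, hC'.2] at this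
    exact absurd this (by decide)
  have heQ : e ∉ Q.edges := fun h => heC' (hQC' h)
  have heA : e ∈ A.edges := by simpa [Walk.edges_reverse, heQ] using he
  have hAB := hC.1.2.2
  simp only [Walk.edges_append, List.nodup_append] at hAB
  rw [Finset.ssubset_iff_of_subset]
  · refine ⟨e, by simp [heA, heC'], ?_⟩
    simp only [Walk.edges_append, Finset.mem_sdiff, List.mem_toFinset, List.mem_append, heQ,
      false_or, not_and, not_not]
    exact fun heB => absurd rfl (hAB.2.2 e heA e heB)
  · intro x hx
    simp only [Walk.edges_append, Finset.mem_sdiff, List.mem_toFinset, List.mem_append] at hx ⊢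
    exact ⟨hx.1.elim (fun h => absurd (hQC' h) hx.2) Or.inr, hx.2⟩

lemma exists_unbalancedCycle_of_isEar (hg : Γ.IsCircuitNull g) (h2 : ∀ x : H, x + x = 0)
    {v v' a b : V} {C : Γ.Walk v v} {C' : Γ.Walk v' v'}
    (hC : Γ.IsUnbalancedCycle C) (hC' : Γ.IsUnbalancedCycle C') (hab : a ≠ b)
    {Q : Γ.Walk a b} (hQ : IsEar C Q) (hQC' : Q.edges ⊆ C'.edges) :
    ∃ D : Γ.Walk a a, Γ.IsUnbalancedCycle D ∧ D.edgeSum g = C.edgeSum g ∧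
      (D.edges.toFinset \ C'.edges.toFinset).card <
        (C.edges.toFinset \ C'.edges.toFinset).card := by
  obtain ⟨A, B, he, hs⟩ := C.exists_append_perm hQ.start_mem hQ.end_mem
  have hA : A.edges ≠ [] := fun h => hab (A.eq_of_edges_eq_nil h)
  have hB : B.edges ≠ [] := fun h => hab (B.eq_of_edges_eq_nil h).symm
  have hAB := hC.of_perm he hs
  have hQ := hQ.of_perm he hs
  rw [← Walk.edgeSum_congr_perm g he, ← List.toFinset_eq_of_perm _ _ he]
  rcases Int.units_eq_one_or (Q.sgn * A.sgn) with hsgn | hsgn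
  · obtain ⟨hD, hsum, hlt⟩ := hg.isUnbalancedCycle_append_of_isEar h2 hAB hA hB hQ hC' hQC' hsgn
    exact ⟨Q.append B, hD, hsum, Finset.card_lt_card hlt⟩
  · have hBA : Γ.IsUnbalancedCycle (B.reverse.append A.reverse) :=
      Walk.reverse_append A B ▸ hAB.reverse
    have hQ' : IsEar (B.reverse.append A.reverse) Q := Walk.reverse_append A B ▸ hQ.reverse
    have hsgn' : Q.sgn * B.reverse.sgn = 1 := by
      have hABsgn := hAB.2
      rw [Walk.sgn_append] at hABsgn
      calc Q.sgn * B.reverse.sgn = (Q.sgn * A.sgn) * (A.sgn * B.sgn) := by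
            rw [Walk.sgn_reverse, mul_assoc, ← mul_assoc A.sgn, Int.units_mul_self, one_mul]
        _ = 1 := by rw [hsgn, hABsgn, Int.units_mul_self]
    obtain ⟨hD, hsum, hlt⟩ := hg.isUnbalancedCycle_append_of_isEar h2 hBA
      (by simpa [Walk.edges_reverse] using hB)
      (by simpa [Walk.edges_reverse] using hA) hQ' hC' hQC' hsgn'
    rw [← Walk.reverse_append, Walk.edgeSum_reverse] at hsum
    rw [← Walk.reverse_append, Walk.edges_reverse, List.toFinset_reverse] at hlt
    exact ⟨Q.append A.reverse, hD, hsum, Finset.card_lt_card hlt⟩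

lemma edgeSum_eq_of_isEar_self (hg : Γ.IsCircuitNull g) (h2 : ∀ x : H, x + x = 0)
    {v v' a : V} {C : Γ.Walk v v} {C' : Γ.Walk v' v'}
    (hC : Γ.IsUnbalancedCycle C) (hC' : Γ.IsUnbalancedCycle C') {Q R : Γ.Walk a a}
    (hQ : IsEar C Q) (he : (Q.append R).edges.Perm C'.edges)
    (hs : (Q.append R).srcs.Perm C'.srcs) : C.edgeSum g = C'.edgeSum g := by
  have hR : R.edges = [] := by
    by_contra hR
    have hnd := hs.nodup_iff.mpr hC'.1.2.1
    rw [Walk.srcs_append, List.nodup_append] at hnd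
    exact hnd.2.2 a (Q.start_mem_srcs hQ.edges_ne_nil) a (R.start_mem_srcs hR) rfl
  have he' : Q.edges.Perm C'.edges := by simpa [hR] using he
  have hs' : Q.srcs.Perm C'.srcs := by simpa [R.srcs_eq_nil_iff.mpr hR] using hs
  obtain ⟨Rc, hRce, hRcs⟩ := C.exists_rotation hQ.start_mem
  have ht := (hQ.of_perm hRce hRcs).isTightHandcuff (hC.of_perm hRce hRcs) (hC'.of_perm he' hs')
  calc C.edgeSum g = Rc.edgeSum g := (Walk.edgeSum_congr_perm g hRce).symm
    _ = Q.edgeSum g := hg.edgeSum_eq_of_isTightHandcuff h2 ht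
    _ = C'.edgeSum g := Walk.edgeSum_congr_perm g he'

theorem edgeSum_eq_of_mem_srcs (hg : Γ.IsCircuitNull g) (h2 : ∀ x : H, x + x = 0)
    {v v' y : V} {C : Γ.Walk v v} {C' : Γ.Walk v' v'}
    (hC : Γ.IsUnbalancedCycle C) (hC' : Γ.IsUnbalancedCycle C') (hy : y ∈ C.srcs)
    (hy' : y ∈ C'.srcs) : C.edgeSum g = C'.edgeSum g := by
  obtain ⟨n, hn⟩ : ∃ n, (C.edges.toFinset \ C'.edges.toFinset).card = n := ⟨_, rfl⟩
  induction n using Nat.strong_induction_on generalizing v y C with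
  | _ n ih =>
  by_cases hsub : C'.edges ⊆ C.edges
  · exact Walk.edgeSum_congr_perm g (hC.1.edges_perm_of_subset hC'.1 hsub).symm
  obtain ⟨a, b, Q, R, hQ, he, hs⟩ := hC'.1.exists_ear hy hy' hsub
  by_cases hab : a = b
  · subst hab
    exact hg.edgeSum_eq_of_isEar_self h2 hC hC' hQ he hs
  obtain ⟨D, hD, hsum, hlt⟩ := hg.exists_unbalancedCycle_of_isEar h2 hC hC' hab hQ
    fun e h => he.subset (by simp [h])
  rw [← hsum]
  exact ih _ (hn ▸ hlt) hD (D.start_mem_srcs hD.1.1)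
    (hs.subset (by simp [Q.start_mem_srcs hQ.edges_ne_nil])) rfl

lemma edgeSum_eq_of_disjoint (hg : Γ.IsCircuitNull g) (h2 : ∀ x : H, x + x = 0)
    (hconn : Γ.Connected) {v v' : V} {C : Γ.Walk v v}
    {C' : Γ.Walk v' v'} (hC : Γ.IsUnbalancedCycle C) (hC' : Γ.IsUnbalancedCycle C')
    (hdisj : ∀ x ∈ C.srcs, x ∉ C'.srcs) : C.edgeSum g = C'.edgeSum g := by
  obtain ⟨W⟩ := hconn.nonempty_walk v v'
  obtain ⟨a, b, P, ha, hb, hP, hPa, hPb⟩ :=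
    W.exists_path_between hdisj (C.start_mem_srcs hC.1.1) (C'.start_mem_srcs hC'.1.1)
  obtain ⟨R, hRe, hRs⟩ := C.exists_rotation ha
  obtain ⟨R', hR'e, hR's⟩ := C'.exists_rotation hb
  have hPR : ∀ x ∈ P.verts, x ∈ R.srcs → x = a := fun x hx hxR => hPa x hx (hRs.subset hxR)
  have hPR' : ∀ x ∈ P.verts, x ∈ R'.srcs → x = b := fun x hx hxR => hPb x hx (hR's.subset hxR)
  have hloose : Γ.IsLooseHandcuff R P R' :=
    ⟨hC.of_perm hRe hRs, hC'.of_perm hR'e hR's, hP,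
      fun x hx hx' => hdisj x (hRs.subset hx) (hR's.subset hx'), hPR, hPR',
      fun e he => ⟨Walk.not_mem_edges_of_forall_mem_srcs_eq hP.2 hPR he,
        Walk.not_mem_edges_of_forall_mem_srcs_eq hP.2 hPR' he⟩⟩
  calc C.edgeSum g = R.edgeSum g := (Walk.edgeSum_congr_perm g hRe).symm
    _ = R'.edgeSum g := hg.edgeSum_eq_of_isLooseHandcuff h2 hloose
    _ = C'.edgeSum g := Walk.edgeSum_congr_perm g hR'e

theorem edgeSum_eq (hg : Γ.IsCircuitNull g) (h2 : ∀ x : H, x + x = 0)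
    (hconn : Γ.Connected) {v v' : V} {C : Γ.Walk v v} {C' : Γ.Walk v' v'}
    (hC : Γ.IsUnbalancedCycle C) (hC' : Γ.IsUnbalancedCycle C') :
    C.edgeSum g = C'.edgeSum g := by
  by_cases h : ∃ y ∈ C.srcs, y ∈ C'.srcs
  · obtain ⟨y, hy, hy'⟩ := h
    exact hg.edgeSum_eq_of_mem_srcs h2 hC hC' hy hy'
  · push Not at h
    exact hg.edgeSum_eq_of_disjoint h2 hconn hC hC' h

end IsCircuitNull

end CircuitNull

section Reduction

variable {G H : Type*} [AddCommGroup G] [AddCommGroup H]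

lemma Walk.map_edgeSum (φ : G →+ H) (f : E → G) {u w : V} (W : Γ.Walk u w) :
    φ (W.edgeSum f) = W.edgeSum (φ ∘ f) := by
  simp [edgeSum, map_list_sum, List.map_map]

lemma Walk.map_tensionSum (φ : G →+ H) (ω : E → Bool → ℤˣ) (f : E → G) {u w : V}
    (W : Γ.Walk u w) : φ (W.tensionSum ω f) = W.tensionSum ω (φ ∘ f) := by
  induction W with
  | nil => simp [tensionSum]
  | cons e d p ih => simp [tensionSum, ih]

lemma Walk.tensionSum_eq_edgeSum (h2 : ∀ x : H, x + x = 0) (ω : E → Bool → ℤˣ) (g : E → H)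
    {u w : V} (W : Γ.Walk u w) : W.tensionSum ω g = W.edgeSum g := by
  induction W with
  | nil => rfl
  | cons e d p ih =>
    rw [tensionSum, zsmul_units_eq_self h2, zsmul_units_eq_self h2, ih]
    simp [edgeSum]

lemma IsTension.comp {ω : E → Bool → ℤˣ} {f : E → G} (hf : Γ.IsTension ω f) (φ : G →+ H) :
    Γ.IsTension ω (φ ∘ f) := fun v W hW => by
  rw [← Walk.map_tensionSum, hf v W hW, map_zero]

lemma IsTension.isCircuitNull (h2 : ∀ x : H, x + x = 0) {ω : E → Bool → ℤˣ} {g : E → H}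
    (hg : Γ.IsTension ω g) : Γ.IsCircuitNull g := fun v W hW =>
  (W.tensionSum_eq_edgeSum h2 ω g).symm.trans (hg v W hW)

end Reduction

end SGraph

theorem tension_unbalanced_cycles_common_coset_general (V E : Type)
    (Γ : SGraph V E) (hconn : Γ.Connected) (hunbal : ¬ Γ.Balanced)
    (ω : E → Bool → ℤˣ)
    (G : Type) [AddCommGroup G] (f : E → G) (hf : Γ.IsTension ω f) :
    ∃ u : G, ∀ (v : V) (W : Γ.Walk v v),
      Γ.IsUnbalancedCycle W → W.edgeSum f - u ∈ twoG G := by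
  obtain ⟨v₀, C₀, hC₀, hsgn⟩ : ∃ (v₀ : V) (C₀ : Γ.Walk v₀ v₀), Γ.IsCycle C₀ ∧ C₀.sgn ≠ 1 := by
    simpa [SGraph.Balanced] using hunbal
  let q := QuotientAddGroup.mk' (twoG G)
  have hg := (hf.comp q).isCircuitNull add_self_eq_zero_mod_twoG
  refine ⟨C₀.edgeSum f, fun v W hW => QuotientAddGroup.eq_iff_sub_mem.mp ?_⟩
  change q (W.edgeSum f) = q (C₀.edgeSum f)
  rw [W.map_edgeSum, C₀.map_edgeSum]
  exact hg.edgeSum_eq add_self_eq_zero_mod_twoG hconn hW ⟨hC₀, Int.units_ne_iff_eq_neg.mp hsgn⟩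

/-- Proposition 7.6: for a connected unbalanced signed graph, the edge sums of a
`G`-tension around unbalanced cycles all lie in a common coset of `2G`. -/
theorem tension_unbalanced_cycles_common_coset (V E : Type) [Finite V] [Finite E]
    (Γ : SGraph V E) (hconn : Γ.Connected) (hunbal : ¬ Γ.Balanced)
    (ω : E → Bool → ℤˣ) (hω : Γ.IsCompatible ω)
    (G : Type) [AddCommGroup G] [Finite G] (f : E → G) (hf : Γ.IsTension ω f) :
    ∃ u : G, ∀ (v : V) (W : Γ.Walk v v),
      Γ.IsUnbalancedCycle W → W.edgeSum f - u ∈ twoG G :=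
  tension_unbalanced_cycles_common_coset_general V E Γ hconn hunbal ω G f hf
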